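/- Let N ∈ {2,3}, α = 4 − N, m₁, m₂ > 0, and ω ∈ ℝ with ω² < min{m₁², m₂²/4}. Let 𝛗_ω be a ground-state pair. If 𝐮 is an admissible pair, not identically zero, with P_ω(𝐮) = 0, then M_ω(𝛗_ω) ≤ M_ω(𝐮). -/

import Mathlib

open MeasureTheory Complex

noncomputable section

/-- The spatial domain `ℝ^N`. -/
abbrev Sp (N : ℕ) := EuclideanSpace ℝ (Fin N)

/-- Square of the `L²` norm: `‖u‖_{L²}²`. -/
def nsq {N : ℕ} (u : Sp N → ℂ) : ℝ := ∫ x, ‖u x‖ ^ 2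

/-- Square of the `L²` norm of the gradient: `‖∇u‖_{L²}²`. -/
def gsq {N : ℕ} (u : Sp N → ℂ) : ℝ := ∫ x, ‖fderiv ℝ u x‖ ^ 2

/-- An admissible pair: differentiable components, with `u_j`, `|∇u_j|`
square-integrable and `|u₁|²|u₂|` integrable. -/
def Admissible {N : ℕ} (u : (Sp N → ℂ) × (Sp N → ℂ)) : Prop :=
  Differentiable ℝ u.1 ∧ Differentiable ℝ u.2 ∧
  MemLp u.1 2 volume ∧ MemLp u.2 2 volume ∧
  Integrable (fun x => ‖fderiv ℝ u.1 x‖ ^ 2) ∧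
  Integrable (fun x => ‖fderiv ℝ u.2 x‖ ^ 2) ∧
  Integrable (fun x => ‖u.1 x‖ ^ 2 * ‖u.2 x‖)

/-- A pair of square-integrable functions. -/
def SqInt {N : ℕ} (v : (Sp N → ℂ) × (Sp N → ℂ)) : Prop :=
  MemLp v.1 2 volume ∧ MemLp v.2 2 volume

/-- The interaction term `G(𝐮) = Re ∫ u₁² conj u₂`. -/
def Gfun {N : ℕ} (u : (Sp N → ℂ) × (Sp N → ℂ)) : ℝ :=
  (∫ x, (u.1 x) ^ 2 * starRingEnd ℂ (u.2 x)).re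

/-- `L(𝐮) = -(1/2)(‖∇u₁‖² + ‖∇u₂‖²) + G(𝐮)`. -/
def Lfun {N : ℕ} (u : (Sp N → ℂ) × (Sp N → ℂ)) : ℝ :=
  -(1/2) * (gsq u.1 + gsq u.2) + Gfun u

/-- `M(𝐮) = (1/2)(m₁²‖u₁‖² + m₂²‖u₂‖²)`. -/
def Mfun {N : ℕ} (m₁ m₂ : ℝ) (u : (Sp N → ℂ) × (Sp N → ℂ)) : ℝ :=
  (1/2) * (m₁ ^ 2 * nsq u.1 + m₂ ^ 2 * nsq u.2)

/-- `M_ω(𝐮) = ((m₁²-ω²)/2)‖u₁‖² + ((m₂²-4ω²)/2)‖u₂‖²`. -/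
def Mom {N : ℕ} (m₁ m₂ ω : ℝ) (u : (Sp N → ℂ) × (Sp N → ℂ)) : ℝ :=
  (m₁ ^ 2 - ω ^ 2) / 2 * nsq u.1 + (m₂ ^ 2 - 4 * ω ^ 2) / 2 * nsq u.2

/-- `J_ω(𝐮) = M_ω(𝐮) - L(𝐮)`. -/
def Jom {N : ℕ} (m₁ m₂ ω : ℝ) (u : (Sp N → ℂ) × (Sp N → ℂ)) : ℝ :=
  Mom m₁ m₂ ω u - Lfun u

/-- The Nehari functional `K_ω(𝐮)`. -/
def Kom {N : ℕ} (m₁ m₂ ω : ℝ) (u : (Sp N → ℂ) × (Sp N → ℂ)) : ℝ :=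
  2 * Mom m₁ m₂ ω u + gsq u.1 + gsq u.2 - 3 * Gfun u

/-- `P_ω(𝐮) = α M_ω(𝐮) - (α+2) L(𝐮)` with `α = 4 - N`. -/
def Pom {N : ℕ} (m₁ m₂ ω : ℝ) (u : (Sp N → ℂ) × (Sp N → ℂ)) : ℝ :=
  (4 - (N : ℝ)) * Mom m₁ m₂ ω u - ((4 - (N : ℝ)) + 2) * Lfun u

/-- `K(𝐯) = (1/2)(‖v₁‖² + ‖v₂‖²)`. -/
def Kfun {N : ℕ} (v : (Sp N → ℂ) × (Sp N → ℂ)) : ℝ :=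
  (1/2) * (nsq v.1 + nsq v.2)

/-- The energy `E(𝐮,𝐯) = K(𝐯) + M(𝐮) - L(𝐮)`. -/
def Efun {N : ℕ} (m₁ m₂ : ℝ) (u v : (Sp N → ℂ) × (Sp N → ℂ)) : ℝ :=
  Kfun v + Mfun m₁ m₂ u - Lfun u

/-- The charge `Q(𝐮,𝐯) = (v₁, i u₁)_{L²} + 2 (v₂, i u₂)_{L²}`. -/
def Qfun {N : ℕ} (u v : (Sp N → ℂ) × (Sp N → ℂ)) : ℝ :=
  (∫ x, v.1 x * starRingEnd ℂ (Complex.I * u.1 x)).re +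
    2 * (∫ x, v.2 x * starRingEnd ℂ (Complex.I * u.2 x)).re

/-- `H(𝐮,𝐯) = -α K(𝐯) + α M(𝐮) - (α+2) L(𝐮)` with `α = 4 - N`. -/
def Hfun {N : ℕ} (m₁ m₂ : ℝ) (u v : (Sp N → ℂ) × (Sp N → ℂ)) : ℝ :=
  -(4 - (N : ℝ)) * Kfun v + (4 - (N : ℝ)) * Mfun m₁ m₂ u - ((4 - (N : ℝ)) + 2) * Lfun u

/-- A ground-state pair: admissible, nonzero, `P_ω = 0`, and `J_ω` attains the
infimum of `J_ω` over nonzero admissible pairs on the Nehari manifold `K_ω = 0`. -/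
def IsGroundState {N : ℕ} (m₁ m₂ ω : ℝ) (φ : (Sp N → ℂ) × (Sp N → ℂ)) : Prop :=
  Admissible φ ∧ φ ≠ 0 ∧ Pom m₁ m₂ ω φ = 0 ∧
  Jom m₁ m₂ ω φ =
    sInf {r : ℝ | ∃ w : (Sp N → ℂ) × (Sp N → ℂ),
      Admissible w ∧ w ≠ 0 ∧ Kom m₁ m₂ ω w = 0 ∧ r = Jom m₁ m₂ ω w}

/-- `𝛙_ω = (iωφ₁, 2iωφ₂)`. -/
def psiOf {N : ℕ} (ω : ℝ) (φ : (Sp N → ℂ) × (Sp N → ℂ)) : (Sp N → ℂ) × (Sp N → ℂ) :=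
  (fun x => Complex.I * (ω : ℂ) * φ.1 x, fun x => 2 * (Complex.I * (ω : ℂ)) * φ.2 x)

/-- The scaling `u^λ(x) = λ² u(λx)`, componentwise. -/
def uscale {N : ℕ} (lam : ℝ) (u : (Sp N → ℂ) × (Sp N → ℂ)) : (Sp N → ℂ) × (Sp N → ℂ) :=
  (fun x => ((lam : ℂ)) ^ 2 * u.1 (lam • x), fun x => ((lam : ℂ)) ^ 2 * u.2 (lam • x))

/-- The scaling `v_λ(x) = λ^{N-2} v(λx)`, componentwise. -/
def vscale {N : ℕ} (lam : ℝ) (v : (Sp N → ℂ) × (Sp N → ℂ)) : (Sp N → ℂ) × (Sp N → ℂ) :=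
  (fun x => ((lam ^ ((N : ℝ) - 2) : ℝ) : ℂ) * v.1 (lam • x),
   fun x => ((lam ^ ((N : ℝ) - 2) : ℝ) : ℂ) * v.2 (lam • x))


section Helpers

variable {N : ℕ}

lemma int_comp_smul' {F : Type*} [NormedAddCommGroup F] [NormedSpace ℝ F]
    (f : Sp N → F) {lam : ℝ} (hl : 0 < lam) :
    ∫ x : Sp N, f (lam • x) = ((lam ^ N)⁻¹ : ℝ) • ∫ x : Sp N, f x := by
  have h := MeasureTheory.Measure.integral_comp_smul_of_nonneg
    (volume : Measure (Sp N)) f lam (hR := hl.le)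
  simpa [finrank_euclideanSpace_fin] using h

lemma nsq_scale (c : ℂ) {lam : ℝ} (hl : 0 < lam) (u : Sp N → ℂ) :
    nsq (fun x => c * u (lam • x)) = ‖c‖ ^ 2 * (lam ^ N)⁻¹ * nsq u := by
  unfold nsq
  simp only [norm_mul, mul_pow]
  rw [MeasureTheory.integral_const_mul, int_comp_smul' (fun x => ‖u x‖ ^ 2) hl,
    smul_eq_mul]
  ring

lemma fderiv_scale (c : ℂ) (lam : ℝ) {u : Sp N → ℂ} (hu : Differentiable ℝ u)
    (x : Sp N) :
    fderiv ℝ (fun y => c * u (lam • y)) x = c • (lam • fderiv ℝ u (lam • x)) := by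
  have hsm : Differentiable ℝ (fun y : Sp N => lam • y) :=
    differentiable_id.const_smul lam
  have hcomp : DifferentiableAt ℝ (fun y : Sp N => u (lam • y)) x :=
    ((hu (lam • x)).comp x (hsm x) : DifferentiableAt ℝ (u ∘ fun y : Sp N => lam • y) x)
  rw [fderiv_const_mul hcomp c]
  congr 1
  have h1 : fderiv ℝ (u ∘ fun y : Sp N => lam • y) x
      = (fderiv ℝ u (lam • x)).comp (fderiv ℝ (fun y : Sp N => lam • y) x) :=
    fderiv_comp x (hu (lam • x)) (hsm x)
  rw [show (fun y : Sp N => u (lam • y)) = u ∘ (fun y : Sp N => lam • y) from rfl, h1,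
    fderiv_fun_const_smul differentiableAt_fun_id lam, fderiv_id']
  ext v
  simp

lemma gsq_scale (c : ℂ) {lam : ℝ} (hl : 0 < lam) {u : Sp N → ℂ}
    (hu : Differentiable ℝ u) :
    gsq (fun x => c * u (lam • x)) = ‖c‖ ^ 2 * lam ^ 2 * (lam ^ N)⁻¹ * gsq u := by
  unfold gsq
  have h : ∀ x : Sp N, ‖fderiv ℝ (fun y => c * u (lam • y)) x‖ ^ 2
      = (‖c‖ ^ 2 * lam ^ 2) * ‖fderiv ℝ u (lam • x)‖ ^ 2 := by
    intro x
    rw [fderiv_scale c lam hu x, norm_smul c (lam • fderiv ℝ u (lam • x)),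
      norm_smul lam (fderiv ℝ u (lam • x)), Real.norm_eq_abs, abs_of_pos hl]
    ring
  simp_rw [h]
  rw [MeasureTheory.integral_const_mul,
    int_comp_smul' (fun x => ‖fderiv ℝ u x‖ ^ 2) hl, smul_eq_mul]
  ring

lemma norm_c_sq {lam : ℝ} (hl : 0 < lam) : ‖((lam : ℂ)) ^ 2‖ ^ 2 = lam ^ 4 := by
  rw [norm_pow, Complex.norm_real, Real.norm_eq_abs, abs_of_pos hl]
  ring

lemma nsq_uscale {lam : ℝ} (hl : 0 < lam) (u : (Sp N → ℂ) × (Sp N → ℂ)) :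
    nsq (uscale lam u).1 = lam ^ 4 * (lam ^ N)⁻¹ * nsq u.1 ∧
    nsq (uscale lam u).2 = lam ^ 4 * (lam ^ N)⁻¹ * nsq u.2 := by
  constructor
  · rw [show (uscale lam u).1 = fun x => ((lam : ℂ)) ^ 2 * u.1 (lam • x) from rfl,
      nsq_scale _ hl, norm_c_sq hl]
  · rw [show (uscale lam u).2 = fun x => ((lam : ℂ)) ^ 2 * u.2 (lam • x) from rfl,
      nsq_scale _ hl, norm_c_sq hl]

lemma gsq_uscale {lam : ℝ} (hl : 0 < lam) {u : (Sp N → ℂ) × (Sp N → ℂ)}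
    (h1 : Differentiable ℝ u.1) (h2 : Differentiable ℝ u.2) :
    gsq (uscale lam u).1 = lam ^ 4 * lam ^ 2 * (lam ^ N)⁻¹ * gsq u.1 ∧
    gsq (uscale lam u).2 = lam ^ 4 * lam ^ 2 * (lam ^ N)⁻¹ * gsq u.2 := by
  constructor
  · rw [show (uscale lam u).1 = fun x => ((lam : ℂ)) ^ 2 * u.1 (lam • x) from rfl,
      gsq_scale _ hl h1, norm_c_sq hl]
  · rw [show (uscale lam u).2 = fun x => ((lam : ℂ)) ^ 2 * u.2 (lam • x) from rfl,
      gsq_scale _ hl h2, norm_c_sq hl]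

lemma Gfun_uscale {lam : ℝ} (hl : 0 < lam) (u : (Sp N → ℂ) × (Sp N → ℂ)) :
    Gfun (uscale lam u) = lam ^ 6 * (lam ^ N)⁻¹ * Gfun u := by
  unfold Gfun uscale
  have h : ∀ x : Sp N, (((lam : ℂ)) ^ 2 * u.1 (lam • x)) ^ 2
        * starRingEnd ℂ (((lam : ℂ)) ^ 2 * u.2 (lam • x))
      = ((lam ^ 6 : ℝ) : ℂ) * ((u.1 (lam • x)) ^ 2 * starRingEnd ℂ (u.2 (lam • x))) := by
    intro x
    rw [map_mul, map_pow, Complex.conj_ofReal]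
    push_cast
    ring
  simp only [h]
  rw [MeasureTheory.integral_const_mul,
    int_comp_smul' (fun x => (u.1 x) ^ 2 * starRingEnd ℂ (u.2 x)) hl,
    Complex.real_smul, ← mul_assoc, ← Complex.ofReal_mul, Complex.re_ofReal_mul]

lemma nsq_nonneg (u : Sp N → ℂ) : 0 ≤ nsq u :=
  MeasureTheory.integral_nonneg fun x => by positivity

lemma gsq_nonneg (u : Sp N → ℂ) : 0 ≤ gsq u :=
  MeasureTheory.integral_nonneg fun x => by positivity

lemma eq_zero_of_nsq_eq_zero {u : Sp N → ℂ} (hc : Continuous u)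
    (hm : MemLp u 2 volume) (h : nsq u = 0) : u = 0 := by
  have hint : Integrable (fun x => ‖u x‖ ^ 2) :=
    (memLp_two_iff_integrable_sq_norm hc.aestronglyMeasurable).1 hm
  have h0 : (fun x : Sp N => ‖u x‖ ^ 2) =ᵐ[volume] 0 :=
    (MeasureTheory.integral_eq_zero_iff_of_nonneg (fun x => by positivity) hint).1 h
  have hae : u =ᵐ[volume] 0 := by
    filter_upwards [h0] with x hx
    have hx' : ‖u x‖ ^ 2 = 0 := hx
    have : ‖u x‖ = 0 := by nlinarith [norm_nonneg (u x)]
    simpa using this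
  exact (hc.ae_eq_iff_eq volume continuous_const).1 hae

lemma admissible_uscale {lam : ℝ} (hl : 0 < lam) {u : (Sp N → ℂ) × (Sp N → ℂ)}
    (hu : Admissible u) : Admissible (uscale lam u) := by
  obtain ⟨hd1, hd2, hm1, hm2, hg1, hg2, hmix⟩ := hu
  have hlne : lam ≠ 0 := hl.ne'
  have hsm : Differentiable ℝ (fun x : Sp N => lam • x) :=
    differentiable_id.const_smul lam
  have hwd : ∀ f : Sp N → ℂ, Differentiable ℝ f →
      Differentiable ℝ (fun x : Sp N => ((lam : ℂ)) ^ 2 * f (lam • x)) := by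
    intro f hf
    exact (hf.comp hsm).const_mul _
  have hml : ∀ f : Sp N → ℂ, Continuous f → MemLp f 2 volume →
      MemLp (fun x : Sp N => ((lam : ℂ)) ^ 2 * f (lam • x)) 2 volume := by
    intro f hfc hfm
    have hint : Integrable (fun x => ‖f x‖ ^ 2) :=
      (memLp_two_iff_integrable_sq_norm hfc.aestronglyMeasurable).1 hfm
    have h2 : Integrable (fun x : Sp N => ‖f (lam • x)‖ ^ 2) :=
      (MeasureTheory.integrable_comp_smul_iff volume (fun x => ‖f x‖ ^ 2) hlne).2 hint
    have e : (fun x : Sp N => ‖((lam : ℂ)) ^ 2 * f (lam • x)‖ ^ 2)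
        = fun x : Sp N => ‖((lam : ℂ)) ^ 2‖ ^ 2 * ‖f (lam • x)‖ ^ 2 := by
      funext x; rw [norm_mul, mul_pow]
    have hcont : Continuous (fun x : Sp N => ((lam : ℂ)) ^ 2 * f (lam • x)) :=
      continuous_const.mul (hfc.comp (continuous_const_smul lam))
    refine (memLp_two_iff_integrable_sq_norm hcont.aestronglyMeasurable).2 ?_
    rw [e]
    exact h2.const_mul _
  have hgl : ∀ f : Sp N → ℂ, Differentiable ℝ f →
      Integrable (fun x => ‖fderiv ℝ f x‖ ^ 2) →
      Integrable (fun x : Sp N =>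
        ‖fderiv ℝ (fun y => ((lam : ℂ)) ^ 2 * f (lam • y)) x‖ ^ 2) := by
    intro f hfd hfi
    have e : (fun x : Sp N => ‖fderiv ℝ (fun y => ((lam : ℂ)) ^ 2 * f (lam • y)) x‖ ^ 2)
        = fun x : Sp N =>
          (‖((lam : ℂ)) ^ 2‖ ^ 2 * lam ^ 2) * ‖fderiv ℝ f (lam • x)‖ ^ 2 := by
      funext x
      rw [fderiv_scale _ _ hfd x, norm_smul (((lam : ℂ)) ^ 2) (lam • fderiv ℝ f (lam • x)),
        norm_smul lam (fderiv ℝ f (lam • x)), Real.norm_eq_abs, abs_of_pos hl]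
      ring
    rw [e]
    exact ((MeasureTheory.integrable_comp_smul_iff volume
      (fun x => ‖fderiv ℝ f x‖ ^ 2) hlne).2 hfi).const_mul _
  have hmix' : Integrable (fun x : Sp N =>
      ‖(uscale lam u).1 x‖ ^ 2 * ‖(uscale lam u).2 x‖) := by
    have e : (fun x : Sp N => ‖(uscale lam u).1 x‖ ^ 2 * ‖(uscale lam u).2 x‖)
        = fun x : Sp N => (‖((lam : ℂ)) ^ 2‖ ^ 2 * ‖((lam : ℂ)) ^ 2‖)
            * (‖u.1 (lam • x)‖ ^ 2 * ‖u.2 (lam • x)‖) := by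
      funext x
      simp only [uscale, norm_mul, mul_pow]
      ring
    rw [e]
    exact ((MeasureTheory.integrable_comp_smul_iff volume
      (fun x => ‖u.1 x‖ ^ 2 * ‖u.2 x‖) hlne).2 hmix).const_mul _
  exact ⟨hwd u.1 hd1, hwd u.2 hd2, hml u.1 hd1.continuous hm1,
    hml u.2 hd2.continuous hm2, hgl u.1 hd1 hg1, hgl u.2 hd2 hg2, hmix'⟩

lemma Jom_nonneg_of_Kom {m₁ m₂ ω : ℝ} (hω1 : ω ^ 2 < m₁ ^ 2)
    (hω2 : ω ^ 2 < m₂ ^ 2 / 4) (w : (Sp N → ℂ) × (Sp N → ℂ))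
    (hK : Kom m₁ m₂ ω w = 0) : 0 ≤ Jom m₁ m₂ ω w := by
  have hM : 0 ≤ Mom m₁ m₂ ω w := by
    unfold Mom
    have := nsq_nonneg w.1
    have := nsq_nonneg w.2
    nlinarith
  have hg1 := gsq_nonneg w.1
  have hg2 := gsq_nonneg w.2
  unfold Kom at hK
  unfold Jom Lfun
  linarith

end Helpers

set_option maxHeartbeats 1600000 in
/-- If `P_ω(𝐮) = 0` and `𝐮 ≠ 0`, then `M_ω(𝛗_ω) ≤ M_ω(𝐮)`. -/
theorem stmt_6 {N : ℕ} (hN : N = 2 ∨ N = 3) (m₁ m₂ ω : ℝ)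
    (hm₁ : 0 < m₁) (hm₂ : 0 < m₂) (hω : ω ^ 2 < min (m₁ ^ 2) (m₂ ^ 2 / 4))
    (φ : (Sp N → ℂ) × (Sp N → ℂ)) (hφ : IsGroundState m₁ m₂ ω φ)
    (u : (Sp N → ℂ) × (Sp N → ℂ)) (hu : Admissible u) (hne : u ≠ 0)
    (hP : Pom m₁ m₂ ω u = 0) :
    Mom m₁ m₂ ω φ ≤ Mom m₁ m₂ ω u := by
  obtain ⟨hφadm, hφne, hφP, hφJ⟩ := hφ
  have hω1 : ω ^ 2 < m₁ ^ 2 := (lt_min_iff.1 hω).1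
  have hω2 : ω ^ 2 < m₂ ^ 2 / 4 := (lt_min_iff.1 hω).2
  obtain ⟨hd1, hd2, hm1, hm2, hg1, hg2, hmix⟩ := id hu
  -- M_ω(u) > 0
  have hn1 := nsq_nonneg u.1
  have hn2 := nsq_nonneg u.2
  have hMu : 0 < Mom m₁ m₂ ω u := by
    rcases lt_or_eq_of_le (show (0:ℝ) ≤ Mom m₁ m₂ ω u by unfold Mom; nlinarith) with h | h
    · exact h
    exfalso
    apply hne
    unfold Mom at h
    have h1 : nsq u.1 = 0 := by nlinarith
    have h2 : nsq u.2 = 0 := by nlinarith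
    have e1 : u.1 = 0 := eq_zero_of_nsq_eq_zero hd1.continuous hm1 h1
    have e2 : u.2 = 0 := eq_zero_of_nsq_eq_zero hd2.continuous hm2 h2
    exact Prod.ext e1 e2
  -- basic facts about N
  have hNr : ((N : ℝ)) = 2 ∨ ((N : ℝ)) = 3 := by
    rcases hN with rfl | rfl
    · left; norm_num
    · right; norm_num
  have hα : (0 : ℝ) < 4 - N := by rcases hNr with h | h <;> rw [h] <;> norm_num
  have hα2 : (0 : ℝ) < 6 - N := by rcases hNr with h | h <;> rw [h] <;> norm_num
  -- L(u) > 0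
  have hPu : (4 - (N : ℝ)) * Mom m₁ m₂ ω u = (6 - (N : ℝ)) * Lfun u := by
    unfold Pom at hP; linarith
  have hLpos : 0 < Lfun u := by nlinarith [mul_pos hα hMu]
  have hgg1 := gsq_nonneg u.1
  have hgg2 := gsq_nonneg u.2
  -- the denominator D = 3G - g = 2L + G > 0
  have hGL : Gfun u = Lfun u + (gsq u.1 + gsq u.2) / 2 := by unfold Lfun; ring
  have hD : 0 < 3 * Gfun u - (gsq u.1 + gsq u.2) := by
    rw [hGL]; linarith
  -- the scaling parameter
  obtain ⟨lam, hlam, hs2⟩ : ∃ lam : ℝ, 0 < lam ∧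
      lam ^ 2 = 2 * Mom m₁ m₂ ω u / (3 * Gfun u - (gsq u.1 + gsq u.2)) :=
    ⟨Real.sqrt (2 * Mom m₁ m₂ ω u / (3 * Gfun u - (gsq u.1 + gsq u.2))),
      Real.sqrt_pos.2 (by positivity), Real.sq_sqrt (by positivity)⟩
  have hsD : lam ^ 2 * (3 * Gfun u - (gsq u.1 + gsq u.2)) = 2 * Mom m₁ m₂ ω u := by
    rw [hs2]; field_simp
  -- the rescaled pair w
  have hwadm : Admissible (uscale lam u) := admissible_uscale hlam hu
  obtain ⟨hnw1, hnw2⟩ := nsq_uscale hlam u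
  obtain ⟨hgw1, hgw2⟩ := gsq_uscale hlam hd1 hd2
  have hGw := Gfun_uscale hlam u
  have hMw : Mom m₁ m₂ ω (uscale lam u) = lam ^ 4 * (lam ^ N)⁻¹ * Mom m₁ m₂ ω u := by
    unfold Mom; rw [hnw1, hnw2]; ring
  have hLw : Lfun (uscale lam u) = lam ^ 6 * (lam ^ N)⁻¹ * Lfun u := by
    unfold Lfun; rw [hgw1, hgw2, hGw]; ring
  have hKw : Kom m₁ m₂ ω (uscale lam u) = 0 := by
    unfold Kom
    rw [hMw, hgw1, hgw2, hGw]
    linear_combination (-((lam ^ N)⁻¹ * lam ^ 4)) * hsD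
  -- w is nonzero
  have hlamC : ((lam : ℂ)) ≠ 0 := by
    simpa using hlam.ne'
  have hwne : uscale lam u ≠ 0 := by
    intro h0
    apply hne
    have key : ∀ (f : Sp N → ℂ), (fun x : Sp N => ((lam : ℂ)) ^ 2 * f (lam • x)) = 0
        → f = 0 := by
      intro f hf
      funext y
      have h1 := congrFun hf (lam⁻¹ • y)
      simp only [Pi.zero_apply, smul_smul, mul_inv_cancel₀ hlam.ne', one_smul,
        mul_eq_zero] at h1
      rcases h1 with h1 | h1
      · exact absurd h1 (pow_ne_zero 2 hlamC)
      · exact h1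
    have e1 : u.1 = 0 := key u.1 (congrArg Prod.fst h0)
    have e2 : u.2 = 0 := key u.2 (congrArg Prod.snd h0)
    exact Prod.ext e1 e2
  -- J(φ) ≤ J(w) via the ground-state property
  have hBdd : BddBelow {r : ℝ | ∃ w' : (Sp N → ℂ) × (Sp N → ℂ),
      Admissible w' ∧ w' ≠ 0 ∧ Kom m₁ m₂ ω w' = 0 ∧ r = Jom m₁ m₂ ω w'} := by
    refine ⟨0, fun r hr => ?_⟩
    obtain ⟨w', _, _, hK', rfl⟩ := hr
    exact Jom_nonneg_of_Kom hω1 hω2 w' hK'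
  have hJφw : Jom m₁ m₂ ω φ ≤ Jom m₁ m₂ ω (uscale lam u) := by
    rw [hφJ]
    exact csInf_le hBdd ⟨uscale lam u, hwadm, hwne, hKw, rfl⟩
  -- J(w) ≤ J(u)
  have hJwu : Jom m₁ m₂ ω (uscale lam u) ≤ Jom m₁ m₂ ω u := by
    unfold Jom
    rw [hMw, hLw]
    rcases hN with rfl | rfl
    · have h4 : lam ^ 4 * ((lam ^ 2 : ℝ))⁻¹ = lam ^ 2 := by
        field_simp
      have h6 : lam ^ 6 * ((lam ^ 2 : ℝ))⁻¹ = lam ^ 4 := by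
        field_simp
      have hL2 : Lfun u = Mom m₁ m₂ ω u / 2 := by
        push_cast at hPu; linarith
      rw [h4, h6, hL2]
      nlinarith [mul_nonneg hMu.le (sq_nonneg (lam ^ 2 - 1))]
    · have h4 : lam ^ 4 * ((lam ^ 3 : ℝ))⁻¹ = lam := by
        field_simp
      have h6 : lam ^ 6 * ((lam ^ 3 : ℝ))⁻¹ = lam ^ 3 := by
        field_simp
      have hL3 : Mom m₁ m₂ ω u = 3 * Lfun u := by
        push_cast at hPu; linarith
      rw [h4, h6, hL3]
      nlinarith [mul_nonneg (mul_nonneg hLpos.le (sq_nonneg (lam - 1)))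
        (by linarith : (0:ℝ) ≤ lam + 2)]
  -- conclude
  have hPφ : (4 - (N : ℝ)) * Mom m₁ m₂ ω φ = (6 - (N : ℝ)) * Lfun φ := by
    unfold Pom at hφP; linarith
  have hJ : Jom m₁ m₂ ω φ ≤ Jom m₁ m₂ ω u := le_trans hJφw hJwu
  unfold Jom at hJ
  rcases hNr with h | h <;> rw [h] at hPφ hPu <;> nlinarith

end
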